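/- arXiv:2001.02131 — 4 statements merged into one kernel-verified Lean document; each statement's English description precedes it below -/
import Mathlib

section
/- For all constants k₃, k₄, k₅ ∈ ℝ, every matrix S ∈ ℝ^{3×3} and every vector h ∈ ℝ³ one has (S⊗h) : Θ : (S⊗h) = k₃ |h|² tr(S)² + k₄ ([h]ₓ : S_skw)² + 4 k₅ |S_skw h|²; in particular (S⊗h) : Θ : (S⊗h) ≥ 0 whenever k₃, k₄, k₅ ≥ 0. -/
open Matrix MeasureTheory
open scoped BigOperators

noncomputable section

/-- Kronecker delta on `Fin 3`. -/
def kd (i j : Fin 3) : ℝ := if i = j then 1 else 0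

/-- Euclidean inner product on `ℝ³`. -/
def dot3 (a b : Fin 3 → ℝ) : ℝ := ∑ i, a i * b i

/-- Squared Euclidean norm on `ℝ³`. -/
def normSq (a : Fin 3 → ℝ) : ℝ := ∑ i, (a i) ^ 2

/-- Cross product on `ℝ³`. -/
def cross3 (a b : Fin 3 → ℝ) : Fin 3 → ℝ :=
  ![a 1 * b 2 - a 2 * b 1, a 2 * b 0 - a 0 * b 2, a 0 * b 1 - a 1 * b 0]

/-- Outer product `a ⊗ b`. -/
def outer (a b : Fin 3 → ℝ) : Matrix (Fin 3) (Fin 3) ℝ := Matrix.of fun i j => a i * b j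

/-- Symmetric part of a matrix. -/
def symPart (A : Matrix (Fin 3) (Fin 3) ℝ) : Matrix (Fin 3) (Fin 3) ℝ := (1 / 2 : ℝ) • (A + Aᵀ)

/-- Skew-symmetric part of a matrix. -/
def skwPart (A : Matrix (Fin 3) (Fin 3) ℝ) : Matrix (Fin 3) (Fin 3) ℝ := (1 / 2 : ℝ) • (A - Aᵀ)

/-- Frobenius inner product `A : B = tr(Aᵀ B)`. -/
def frob (A B : Matrix (Fin 3) (Fin 3) ℝ) : ℝ := ∑ i, ∑ j, A i j * B i j

/-- Squared Frobenius norm. -/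
def frobSq (A : Matrix (Fin 3) (Fin 3) ℝ) : ℝ := ∑ i, ∑ j, (A i j) ^ 2

/-- The hat map `[a]ₓ`, so that `[a]ₓ b = a × b`. -/
def hatm (a : Fin 3 → ℝ) : Matrix (Fin 3) (Fin 3) ℝ :=
  !![0, -a 2, a 1; a 2, 0, -a 0; -a 1, a 0, 0]

/-- The vee map, left inverse of the hat map: `vee A = (A₃₂, A₁₃, A₂₁)`. -/
def vee (A : Matrix (Fin 3) (Fin 3) ℝ) : Fin 3 → ℝ := ![A 2 1, A 0 2, A 1 0]

/-- Entries of the fourth-order tensor `Λ`. -/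
def lamE (k₁ k₂ : ℝ) (i j k l : Fin 3) : ℝ :=
  k₁ * kd i j * kd k l + k₂ * (kd i k * kd j l - kd i l * kd j k)

/-- The contraction `S : Λ : T`. -/
def lamQ (k₁ k₂ : ℝ) (S T : Matrix (Fin 3) (Fin 3) ℝ) : ℝ :=
  ∑ i, ∑ j, ∑ k, ∑ l, S i j * lamE k₁ k₂ i j k l * T k l

/-- Entries of the sixth-order tensor `Θ`. -/
def thE (k₃ k₄ k₅ : ℝ) (i j k l m n : Fin 3) : ℝ :=
  k₃ * kd i j * kd l m * kd k n
    + k₅ * (kd i l * kd m n * kd j k - kd m i * kd l n * kd j k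
        - kd l j * kd m n * kd i k + kd j m * kd l n * kd i k)
    + k₄ * (kd k n * kd j m * kd i l + kd k m * kd j l * kd i n + kd k l * kd j n * kd i m
        - kd k n * kd j l * kd i m - kd k m * kd j n * kd i l - kd k l * kd j m * kd i n)

/-- The contraction `(S⊗h) : Θ : (S⊗h)`. -/
def thQ (k₃ k₄ k₅ : ℝ) (S : Matrix (Fin 3) (Fin 3) ℝ) (h : Fin 3 → ℝ) : ℝ :=
  ∑ i, ∑ j, ∑ k, ∑ l, ∑ m, ∑ n, thE k₃ k₄ k₅ i j k l m n * S i j * h k * S l m * h n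

/-- Jacobian matrix of a vector field, `(∇f)_{ij} = ∂_j f_i`. -/
def jac (f : (Fin 3 → ℝ) → Fin 3 → ℝ) (x : Fin 3 → ℝ) : Matrix (Fin 3) (Fin 3) ℝ :=
  Matrix.of fun i j => fderiv ℝ f x (Pi.single j 1) i

/-- Divergence of a vector field. -/
def divg (f : (Fin 3 → ℝ) → Fin 3 → ℝ) (x : Fin 3 → ℝ) : ℝ := ∑ i, jac f x i i

/-- Curl of a vector field. -/
def curl (f : (Fin 3 → ℝ) → Fin 3 → ℝ) (x : Fin 3 → ℝ) : Fin 3 → ℝ :=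
  ![jac f x 2 1 - jac f x 1 2, jac f x 0 2 - jac f x 2 0, jac f x 1 0 - jac f x 0 1]

/-- Row-wise divergence of a matrix field, `(div A)_i = ∑_j ∂_j A_{ij}`. -/
def matDiv (A : (Fin 3 → ℝ) → Matrix (Fin 3) (Fin 3) ℝ) (x : Fin 3 → ℝ) : Fin 3 → ℝ :=
  fun i => ∑ j, fderiv ℝ (fun y => A y i j) x (Pi.single j 1)

/-! The tensor `Θ` is linear in `(k₃, k₄, k₅)`, so the quadratic form splits into three pieces, and
in each the Kronecker deltas contract away. The `k₃` piece gives `tr(S)² |h|²`. The `k₄` tensor is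
the `3 × 3` determinant of Kronecker deltas, i.e. `ε_{ijk} ε_{lmn}`, so its piece is the square of
`ε_{ijk} S_{ij} h_k = -([h]ₓ : S)`, and `S` may be replaced by `S_skw` since `[h]ₓ` is skew. The `k₅`
piece contracts to `|Sh|² - 2 Sh · Sᵀh + |Sᵀh|² = |(S - Sᵀ) h|² = 4 |S_skw h|²`. -/

lemma normSq_nonneg (a : Fin 3 → ℝ) : 0 ≤ normSq a :=
  Finset.sum_nonneg fun _ _ => sq_nonneg _

lemma normSq_smul (c : ℝ) (a : Fin 3 → ℝ) : normSq (c • a) = c ^ 2 * normSq a := by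
  simp only [normSq, Pi.smul_apply, smul_eq_mul, mul_pow, Finset.mul_sum]

lemma four_mul_normSq_skwPart_mulVec (S : Matrix (Fin 3) (Fin 3) ℝ) (h : Fin 3 → ℝ) :
    4 * normSq (skwPart S *ᵥ h) = normSq ((S - Sᵀ) *ᵥ h) := by
  rw [skwPart, smul_mulVec, normSq_smul]
  ring

lemma frob_transpose_right (A B : Matrix (Fin 3) (Fin 3) ℝ) : frob A Bᵀ = frob Aᵀ B := by
  simp only [frob, transpose_apply]
  exact Finset.sum_comm

lemma frob_skwPart_of_transpose_eq_neg {A : Matrix (Fin 3) (Fin 3) ℝ} (hA : Aᵀ = -A)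
    (B : Matrix (Fin 3) (Fin 3) ℝ) : frob A (skwPart B) = frob A B := by
  have h_transpose : frob A Bᵀ = -frob A B := by
    rw [frob_transpose_right, hA]
    simp only [frob, Matrix.neg_apply, neg_mul, Finset.sum_neg_distrib]
  have h_half : frob A (skwPart B) = 1 / 2 * (frob A B - frob A Bᵀ) := by
    simp only [frob, skwPart, Matrix.smul_apply, Matrix.sub_apply, smul_eq_mul, Finset.mul_sum,
      ← Finset.sum_sub_distrib]
    congr! 2 with i _ j _
    ring
  rw [h_half, h_transpose]
  ring

lemma hatm_transpose (a : Fin 3 → ℝ) : (hatm a)ᵀ = -hatm a := by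
  ext i j
  fin_cases i <;> fin_cases j <;> simp [hatm]

lemma thE_eq_add (k₃ k₄ k₅ : ℝ) (i j k l m n : Fin 3) :
    thE k₃ k₄ k₅ i j k l m n
      = k₃ * thE 1 0 0 i j k l m n + k₄ * thE 0 1 0 i j k l m n + k₅ * thE 0 0 1 i j k l m n := by
  simp only [thE]
  ring

lemma thQ_eq_add (k₃ k₄ k₅ : ℝ) (S : Matrix (Fin 3) (Fin 3) ℝ) (h : Fin 3 → ℝ) :
    thQ k₃ k₄ k₅ S h = k₃ * thQ 1 0 0 S h + k₄ * thQ 0 1 0 S h + k₅ * thQ 0 0 1 S h := by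
  simp only [thQ, thE_eq_add k₃ k₄ k₅, Finset.mul_sum, add_mul, Finset.sum_add_distrib, mul_assoc]

section Contraction

variable (S : Matrix (Fin 3) (Fin 3) ℝ) (h : Fin 3 → ℝ)

lemma thQ_one_zero_zero : thQ 1 0 0 S h = S.trace ^ 2 * normSq h := by
  simp only [thQ, thE, kd, zero_mul, add_zero, one_mul, mul_one, ite_mul, mul_ite, mul_zero,
    Finset.sum_ite_eq, Finset.mem_univ, if_true, Finset.sum_ite_irrel, Finset.sum_const_zero]
  simp only [normSq, trace, diag, Fin.sum_univ_three]
  ring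

lemma thQ_zero_one_zero : thQ 0 1 0 S h = frob (hatm h) S ^ 2 := by
  simp only [thQ, thE, kd, zero_mul, zero_add, add_zero, one_mul, sub_mul, add_mul,
    Finset.sum_add_distrib, Finset.sum_sub_distrib, ite_mul, mul_ite, mul_one, mul_zero,
    Finset.sum_ite_eq, Finset.mem_univ, if_true, Finset.sum_ite_irrel, Finset.sum_const_zero]
  simp only [frob, hatm, Fin.sum_univ_three, of_apply, cons_val', cons_val_zero, cons_val_one,
    cons_val_two, head_cons, tail_cons, empty_val', cons_val_fin_one, head_fin_const]
  ring

lemma thQ_zero_zero_one : thQ 0 0 1 S h = normSq ((S - Sᵀ) *ᵥ h) := by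
  simp only [thQ, thE, kd, zero_mul, zero_add, add_zero, one_mul, sub_mul, add_mul,
    Finset.sum_add_distrib, Finset.sum_sub_distrib, ite_mul, mul_ite, mul_one, mul_zero,
    Finset.sum_ite_eq, Finset.sum_ite_eq', Finset.mem_univ, if_true, Finset.sum_ite_irrel,
    Finset.sum_const_zero]
  simp only [normSq, mulVec, dotProduct, Matrix.sub_apply, transpose_apply, Fin.sum_univ_three]
  ring

end Contraction

/-- `(S⊗h) : Θ : (S⊗h) = k₃ |h|² tr(S)² + k₄ ([h]ₓ : S_skw)² + 4 k₅ |S_skw h|²`;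
in particular it is nonnegative whenever `k₃, k₄, k₅ ≥ 0`. -/
theorem thQ_repr (k₃ k₄ k₅ : ℝ) (S : Matrix (Fin 3) (Fin 3) ℝ) (h : Fin 3 → ℝ) :
    thQ k₃ k₄ k₅ S h
        = k₃ * normSq h * (Matrix.trace S) ^ 2 + k₄ * frob (hatm h) (skwPart S) ^ 2
          + 4 * k₅ * normSq (Matrix.mulVec (skwPart S) h) ∧
      (0 ≤ k₃ → 0 ≤ k₄ → 0 ≤ k₅ → 0 ≤ thQ k₃ k₄ k₅ S h) := by
  have repr : thQ k₃ k₄ k₅ S h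
      = k₃ * normSq h * (Matrix.trace S) ^ 2 + k₄ * frob (hatm h) (skwPart S) ^ 2
        + 4 * k₅ * normSq (Matrix.mulVec (skwPart S) h) := by
    rw [thQ_eq_add, thQ_one_zero_zero, thQ_zero_one_zero, thQ_zero_zero_one,
      frob_skwPart_of_transpose_eq_neg (hatm_transpose h), ← four_mul_normSq_skwPart_mulVec]
    ring
  refine ⟨repr, fun h₃ h₄ h₅ => ?_⟩
  rw [repr]
  have hh := normSq_nonneg h
  have hSh := normSq_nonneg (skwPart S *ᵥ h)
  positivity
end
end

section
/- Quasi-convexity of the Λ-quadratic form: let k₁, k₂ > 0, let D ⊂ ℝ³ be a bounded open set, let A ∈ ℝ^{3×3}, and let ξ : ℝ³ → ℝ³ be smooth with compact support contained in D. Then ∫_D (A + ∇ξ(y)) : Λ : (A + ∇ξ(y)) dy ≥ vol(D) · (A : Λ : A), where vol(D) is the Lebesgue measure of D. -/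
open Matrix MeasureTheory
open scoped BigOperators

noncomputable section

section AuxLemmas

lemma lamQ_add' (k₁ k₂ : ℝ) (A B : Matrix (Fin 3) (Fin 3) ℝ) :
    lamQ k₁ k₂ (A + B) (A + B)
      = lamQ k₁ k₂ A A + (2 * lamQ k₁ k₂ A B + lamQ k₁ k₂ B B) := by
  simp [lamQ, lamE, kd, Fin.sum_univ_three, Matrix.add_apply]; ring

lemma lamQ_self_nonneg' {k₁ k₂ : ℝ} (hk₁ : 0 ≤ k₁) (hk₂ : 0 ≤ k₂)
    (B : Matrix (Fin 3) (Fin 3) ℝ) : 0 ≤ lamQ k₁ k₂ B B := by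
  have h : lamQ k₁ k₂ B B = k₁ * (B 0 0 + B 1 1 + B 2 2) ^ 2
      + k₂ * ((B 0 1 - B 1 0) ^ 2 + (B 0 2 - B 2 0) ^ 2 + (B 1 2 - B 2 1) ^ 2) := by
    simp [lamQ, lamE, kd, Fin.sum_univ_three]; ring
  rw [h]; positivity

lemma lamQ_left' (k₁ k₂ : ℝ) (A B : Matrix (Fin 3) (Fin 3) ℝ) :
    lamQ k₁ k₂ A B = ∑ k, ∑ l, (∑ i, ∑ j, A i j * lamE k₁ k₂ i j k l) * B k l := by
  simp [lamQ, Fin.sum_univ_three]; ring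

lemma jac_entry_continuous' {ξ : (Fin 3 → ℝ) → Fin 3 → ℝ} (hξ : ContDiff ℝ (⊤ : ℕ∞) ξ)
    (i j : Fin 3) : Continuous fun y => jac ξ y i j := by
  have hfd : Continuous fun y => fderiv ℝ ξ y := hξ.continuous_fderiv (by simp)
  exact (continuous_apply i).comp (hfd.clm_apply continuous_const)

lemma jac_entry_zero' {ξ : (Fin 3 → ℝ) → Fin 3 → ℝ} {y : Fin 3 → ℝ}
    (hy : y ∉ tsupport ξ) (i j : Fin 3) : jac ξ y i j = 0 := by
  have h0 : fderiv ℝ ξ y = 0 := by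
    by_contra h
    exact hy (support_fderiv_subset ℝ h)
  show fderiv ℝ ξ y (Pi.single j 1) i = 0
  rw [h0]; rfl

lemma jac_entry_integral_zero' {ξ : (Fin 3 → ℝ) → Fin 3 → ℝ} (hξ : ContDiff ℝ (⊤ : ℕ∞) ξ)
    (hξc : HasCompactSupport ξ) (i j : Fin 3) : ∫ y, jac ξ y i j = 0 := by
  have hdiff : Differentiable ℝ ξ := hξ.differentiable (by simp)
  have hdiffi : Differentiable ℝ fun y => ξ y i :=
    (ContinuousLinearMap.proj (R := ℝ) (φ := fun _ : Fin 3 => ℝ) i).differentiable.comp hdiff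
  have hrw : ∀ x, fderiv ℝ (fun y => ξ y i) x (Pi.single j 1) = jac ξ x i j := by
    intro x
    have h1 : HasFDerivAt (fun y => ξ y i)
        (((ContinuousLinearMap.proj (R := ℝ) (φ := fun _ : Fin 3 => ℝ) i)).comp
          (fderiv ℝ ξ x)) x :=
      (ContinuousLinearMap.proj (R := ℝ) (φ := fun _ : Fin 3 => ℝ) i).hasFDerivAt.comp x
        (hdiff x).hasFDerivAt
    rw [h1.fderiv]
    rfl
  have hJint : Integrable (fun y => jac ξ y i j) :=
    (jac_entry_continuous' hξ i j).integrable_of_hasCompactSupport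
      (HasCompactSupport.intro hξc fun y hy => jac_entry_zero' hy i j)
  have key := integral_mul_fderiv_eq_neg_fderiv_mul_of_integrable
      (f := fun _ : Fin 3 → ℝ => (1 : ℝ)) (g := fun y => ξ y i)
      (v := Pi.single j 1) (μ := volume)
      ?_ ?_ ?_ (fun x _ => differentiableAt_const 1) (fun x _ => hdiffi x)
  · simpa [hrw] using key
  · simp only [fderiv_fun_const]
    simpa using (integrable_zero _ ℝ (volume : Measure (Fin 3 → ℝ)))
  · simp only [one_mul]
    simp_rw [hrw]; exact hJint
  · simp only [one_mul]
    exact (((continuous_apply i).comp hξ.continuous).integrable_of_hasCompactSupport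
      (HasCompactSupport.intro hξc fun y hy => by
        have h : ξ y = 0 := image_eq_zero_of_notMem_tsupport hy
        simp [h]))

end AuxLemmas

/-- Quasi-convexity of the Λ-quadratic form:
`∫_D (A + ∇ξ) : Λ : (A + ∇ξ) dy ≥ vol(D) ⬝ (A : Λ : A)` for smooth `ξ` compactly
supported in the bounded open set `D`. -/
theorem lamQ_quasiconvex (k₁ k₂ : ℝ) (hk₁ : 0 < k₁) (hk₂ : 0 < k₂)
    (D : Set (Fin 3 → ℝ)) (hDo : IsOpen D) (hDb : Bornology.IsBounded D)
    (A : Matrix (Fin 3) (Fin 3) ℝ) (ξ : (Fin 3 → ℝ) → Fin 3 → ℝ)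
    (hξ : ContDiff ℝ (⊤ : ℕ∞) ξ) (hξc : HasCompactSupport ξ) (hξD : tsupport ξ ⊆ D) :
    (volume D).toReal * lamQ k₁ k₂ A A
      ≤ ∫ y in D, lamQ k₁ k₂ (A + jac ξ y) (A + jac ξ y) := by
  have hDm : MeasurableSet D := hDo.measurableSet
  have hDfin : volume D < ⊤ := hDb.measure_lt_top
  -- entry facts
  have hJc := jac_entry_continuous' hξ
  have hJ0 : ∀ y, y ∉ tsupport ξ → ∀ i j, jac ξ y i j = 0 :=
    fun y hy i j => jac_entry_zero' hy i j
  have hJint : ∀ i j, Integrable (fun y => jac ξ y i j) := fun i j =>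
    (hJc i j).integrable_of_hasCompactSupport
      (HasCompactSupport.intro hξc fun y hy => hJ0 y hy i j)
  have hJzeroD : ∀ i j, ∫ y in D, jac ξ y i j = 0 := by
    intro i j
    rw [setIntegral_eq_integral_of_forall_compl_eq_zero
      (fun y hy => hJ0 y (fun h => hy (hξD h)) i j)]
    exact jac_entry_integral_zero' hξ hξc i j
  -- the cross term vanishes
  have hcross : ∫ y in D, lamQ k₁ k₂ A (jac ξ y) = 0 := by
    simp_rw [lamQ_left' k₁ k₂ A]
    rw [integral_finset_sum _ (fun k _ => integrable_finset_sum _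
      (fun l _ => ((hJint k l).const_mul _).integrableOn))]
    rw [Finset.sum_congr rfl (fun k _ => integral_finset_sum _
      (fun l _ => ((hJint k l).const_mul _).integrableOn))]
    simp [integral_const_mul, hJzeroD]
  -- integrability of the pieces
  have hcontC : Continuous fun y => lamQ k₁ k₂ A (jac ξ y) := by
    unfold lamQ
    exact continuous_finset_sum _ fun i _ => continuous_finset_sum _ fun j _ =>
      continuous_finset_sum _ fun k _ => continuous_finset_sum _ fun l _ =>
        continuous_const.mul (hJc k l)
  have hcontQ : Continuous fun y => lamQ k₁ k₂ (jac ξ y) (jac ξ y) := by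
    unfold lamQ
    exact continuous_finset_sum _ fun i _ => continuous_finset_sum _ fun j _ =>
      continuous_finset_sum _ fun k _ => continuous_finset_sum _ fun l _ =>
        ((hJc i j).mul continuous_const).mul (hJc k l)
  have hcsC : HasCompactSupport fun y => lamQ k₁ k₂ A (jac ξ y) :=
    HasCompactSupport.intro hξc fun y hy => by
      simp [lamQ, hJ0 y hy]
  have hcsQ : HasCompactSupport fun y => lamQ k₁ k₂ (jac ξ y) (jac ξ y) :=
    HasCompactSupport.intro hξc fun y hy => by
      simp [lamQ, hJ0 y hy]
  have hintC : IntegrableOn (fun y => lamQ k₁ k₂ A (jac ξ y)) D volume :=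
    (hcontC.integrable_of_hasCompactSupport hcsC).integrableOn
  have hintQ : IntegrableOn (fun y => lamQ k₁ k₂ (jac ξ y) (jac ξ y)) D volume :=
    (hcontQ.integrable_of_hasCompactSupport hcsQ).integrableOn
  have hintConst : IntegrableOn (fun _ => lamQ k₁ k₂ A A) D volume :=
    integrableOn_const hDfin.ne
  have hnn : 0 ≤ ∫ y in D, lamQ k₁ k₂ (jac ξ y) (jac ξ y) :=
    setIntegral_nonneg hDm fun y _ => lamQ_self_nonneg' hk₁.le hk₂.le _
  have h1 : ∫ y in D, lamQ k₁ k₂ (A + jac ξ y) (A + jac ξ y)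
      = (volume D).toReal * lamQ k₁ k₂ A A
        + ∫ y in D, lamQ k₁ k₂ (jac ξ y) (jac ξ y) := by
    simp_rw [lamQ_add']
    have hint2 : IntegrableOn
        (fun y => 2 * lamQ k₁ k₂ A (jac ξ y) + lamQ k₁ k₂ (jac ξ y) (jac ξ y)) D volume :=
      (hintC.const_mul 2).add hintQ
    rw [integral_add hintConst hint2,
      integral_add (hintC.const_mul 2) hintQ, integral_const_mul, hcross,
      setIntegral_const, smul_eq_mul, measureReal_def]
    ring
  rw [h1]
  linarith
end
end

section
/- Coercivity of the second-order operator induced by Λ on compactly supported fields: let k₁, k₂ > 0. Then for every smooth compactly supported vector field d : ℝ³ → ℝ³, (min{k₁,k₂}/2) ∫_{ℝ³} |∇d|² dx ≤ (1/2) ∫_{ℝ³} ∇d : Λ : ∇d dx. -/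
open Matrix MeasureTheory
open scoped BigOperators

noncomputable section

lemma lamQ_eq (k₁ k₂ : ℝ) (S : Matrix (Fin 3) (Fin 3) ℝ) :
    lamQ k₁ k₂ S S = k₁ * (∑ i, ∑ j, S i i * S j j)
      + k₂ * ((∑ i, ∑ j, S i j * S i j) - ∑ i, ∑ j, S i j * S j i) := by
  simp [lamQ, lamE, kd, Fin.sum_univ_succ]
  ring

lemma trsq_le (S : Matrix (Fin 3) (Fin 3) ℝ) :
    (∑ i, ∑ j, S i j * S j i) ≤ ∑ i, ∑ j, S i j * S i j := by
  simp [Fin.sum_univ_succ]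
  nlinarith [sq_nonneg (S 0 1 - S 1 0), sq_nonneg (S 0 2 - S 2 0), sq_nonneg (S 1 2 - S 2 1)]

section P
variable {d : (Fin 3 → ℝ) → Fin 3 → ℝ}

lemma comp_smooth (hd : ContDiff ℝ (⊤ : ℕ∞) d) (i : Fin 3) :
    ContDiff ℝ (⊤ : ℕ∞) (fun y => d y i) := (contDiff_pi.1 hd) i

lemma comp_supp (hdc : HasCompactSupport d) (i : Fin 3) :
    HasCompactSupport (fun y => d y i) :=
  hdc.mono' (by
    intro x hx
    apply subset_tsupport d
    intro h0
    exact hx (by simp [h0]))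

def P (d : (Fin 3 → ℝ) → Fin 3 → ℝ) (i j : Fin 3) (x : Fin 3 → ℝ) : ℝ :=
  fderiv ℝ (fun y => d y i) x (Pi.single j 1)

lemma P_smooth (hd : ContDiff ℝ (⊤ : ℕ∞) d) (i j : Fin 3) : ContDiff ℝ (⊤ : ℕ∞) (P d i j) := by
  have h1 : ContDiff ℝ (⊤ : ℕ∞) (fderiv ℝ (fun y => d y i)) :=
    (comp_smooth hd i).fderiv_right (by simp)
  exact (ContinuousLinearMap.apply ℝ ℝ (Pi.single j 1)).contDiff.comp h1

lemma P_supp (hdc : HasCompactSupport d) (i j : Fin 3) : HasCompactSupport (P d i j) :=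
  (comp_supp hdc i).fderiv_apply ℝ (Pi.single j 1)

lemma PP_integrable (hd : ContDiff ℝ (⊤ : ℕ∞) d) (hdc : HasCompactSupport d) (i j k l : Fin 3) :
    Integrable (fun x => P d i j x * P d k l x) := by
  apply Continuous.integrable_of_hasCompactSupport
  · exact ((P_smooth hd i j).continuous).mul ((P_smooth hd k l).continuous)
  · exact ((P_supp hdc i j).mul_right)

lemma dP_integrable (hd : ContDiff ℝ (⊤ : ℕ∞) d) (hdc : HasCompactSupport d) (i k l : Fin 3) :
    Integrable (fun x => d x i * P d k l x) := by
  apply Continuous.integrable_of_hasCompactSupport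
  · exact ((comp_smooth hd i).continuous).mul ((P_smooth hd k l).continuous)
  · exact ((comp_supp hdc i).mul_right)

lemma P_fderiv (hd : ContDiff ℝ (⊤ : ℕ∞) d) (j : Fin 3) (v w : Fin 3 → ℝ) (x : Fin 3 → ℝ) :
    fderiv ℝ (fun y => fderiv ℝ (fun z => d z j) y v) x w
      = fderiv ℝ (fderiv ℝ (fun z => d z j)) x w v := by
  have h1 : DifferentiableAt ℝ (fderiv ℝ (fun z => d z j)) x :=
    (((comp_smooth hd j).fderiv_right (m := (⊤ : ℕ∞)) (by simp)).differentiable (by simp)) x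
  have : (fun y => fderiv ℝ (fun z => d z j) y v)
      = (ContinuousLinearMap.apply ℝ ℝ v) ∘ (fderiv ℝ (fun z => d z j)) := rfl
  rw [this, fderiv_comp x (ContinuousLinearMap.differentiableAt _) h1]
  simp

lemma P_symm (hd : ContDiff ℝ (⊤ : ℕ∞) d) (j : Fin 3) (v w : Fin 3 → ℝ) (x : Fin 3 → ℝ) :
    fderiv ℝ (fun y => fderiv ℝ (fun z => d z j) y v) x w
      = fderiv ℝ (fun y => fderiv ℝ (fun z => d z j) y w) x v := by
  rw [P_fderiv hd j v w x, P_fderiv hd j w v x]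
  exact ((comp_smooth hd j).contDiffAt.isSymmSndFDerivAt (by rw [minSmoothness_of_isRCLikeNormedField]; exact WithTop.coe_le_coe.2 (le_top : (2 : ℕ∞) ≤ ⊤))).eq w v

lemma key_ibp (hd : ContDiff ℝ (⊤ : ℕ∞) d) (hdc : HasCompactSupport d) (i j : Fin 3) :
    ∫ x, P d i j x * P d j i x = ∫ x, P d i i x * P d j j x := by
  have hdiff : ∀ k, Differentiable ℝ (fun y => d y k) :=
    fun k => (comp_smooth hd k).differentiable (by simp)
  have hPdiff : ∀ k l, Differentiable ℝ (P d k l) :=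
    fun k l => (P_smooth hd k l).differentiable (by simp)
  have h1 : ∫ x, (d x i) * fderiv ℝ (P d j i) x (Pi.single j 1)
      = - ∫ x, (fderiv ℝ (fun y => d y i) x (Pi.single j 1)) * P d j i x := by
    apply integral_mul_fderiv_eq_neg_fderiv_mul_of_integrable
    · exact PP_integrable hd hdc i j j i
    · apply Continuous.integrable_of_hasCompactSupport
      · exact ((comp_smooth hd i).continuous).mul
          ((ContinuousLinearMap.apply ℝ ℝ (Pi.single j 1)).continuous.comp
            ((P_smooth hd j i).fderiv_right (m := (⊤ : ℕ∞)) (by simp)).continuous)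
      · exact (comp_supp hdc i).mul_right
    · exact dP_integrable hd hdc i j i
    · exact fun x _ => hdiff i x
    · exact fun x _ => hPdiff j i x
  have h2 : ∫ x, (d x i) * fderiv ℝ (P d j j) x (Pi.single i 1)
      = - ∫ x, (fderiv ℝ (fun y => d y i) x (Pi.single i 1)) * P d j j x := by
    apply integral_mul_fderiv_eq_neg_fderiv_mul_of_integrable
    · exact PP_integrable hd hdc i i j j
    · apply Continuous.integrable_of_hasCompactSupport
      · exact ((comp_smooth hd i).continuous).mul
          ((ContinuousLinearMap.apply ℝ ℝ (Pi.single i 1)).continuous.comp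
            ((P_smooth hd j j).fderiv_right (m := (⊤ : ℕ∞)) (by simp)).continuous)
      · exact (comp_supp hdc i).mul_right
    · exact dP_integrable hd hdc i j j
    · exact fun x _ => hdiff i x
    · exact fun x _ => hPdiff j j x
  have h3 : ∀ x, fderiv ℝ (P d j i) x (Pi.single j 1) = fderiv ℝ (P d j j) x (Pi.single i 1) :=
    fun x => P_symm hd j (Pi.single i 1) (Pi.single j 1) x
  have h4 : (∫ x, (d x i) * fderiv ℝ (P d j i) x (Pi.single j 1))
      = ∫ x, (d x i) * fderiv ℝ (P d j j) x (Pi.single i 1) := by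
    congr 1; funext x; rw [h3 x]
  have := h1.symm.trans (h4.trans h2)
  have := neg_injective this
  simpa [P] using this

lemma jac_eq_P (hd : ContDiff ℝ (⊤ : ℕ∞) d) (x : Fin 3 → ℝ) (i j : Fin 3) :
    jac d x i j = P d i j x := by
  have hdx : HasFDerivAt d (fderiv ℝ d x) x := ((hd.differentiable (by simp)) x).hasFDerivAt
  have := ((ContinuousLinearMap.proj (R := ℝ) (φ := fun _ : Fin 3 => ℝ) i).hasFDerivAt.comp
    x hdx).fderiv
  simp only [P]
  have heq : (fun y => d y i)
      = (ContinuousLinearMap.proj (R := ℝ) (φ := fun _ : Fin 3 => ℝ) i) ∘ d := rfl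
  rw [heq, this]
  rfl

end P

/-- Coercivity of the second-order operator induced by Λ on compactly supported fields:
`(min{k₁,k₂}/2) ∫ |∇d|² ≤ (1/2) ∫ ∇d : Λ : ∇d`. -/
theorem lamQ_coercive (k₁ k₂ : ℝ) (hk₁ : 0 < k₁) (hk₂ : 0 < k₂)
    (d : (Fin 3 → ℝ) → Fin 3 → ℝ) (hd : ContDiff ℝ (⊤ : ℕ∞) d) (hdc : HasCompactSupport d) :
    (min k₁ k₂ / 2) * ∫ x, frobSq (jac d x)
      ≤ (1 / 2) * ∫ x, lamQ k₁ k₂ (jac d x) (jac d x) := by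
  set m := min k₁ k₂ with hm
  -- integrable pieces
  have hIF : Integrable (fun x => ∑ i : Fin 3, ∑ j : Fin 3, P d i j x * P d i j x) :=
    integrable_finset_sum _ (fun i _ => integrable_finset_sum _
      (fun j _ => PP_integrable hd hdc i j i j))
  have hIQ : Integrable (fun x => ∑ i : Fin 3, ∑ j : Fin 3, P d i j x * P d j i x) :=
    integrable_finset_sum _ (fun i _ => integrable_finset_sum _
      (fun j _ => PP_integrable hd hdc i j j i))
  have hIT : Integrable (fun x => ∑ i : Fin 3, ∑ j : Fin 3, P d i i x * P d j j x) :=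
    integrable_finset_sum _ (fun i _ => integrable_finset_sum _
      (fun j _ => PP_integrable hd hdc i i j j))
  -- ∫ Q = ∫ T
  have hQT : (∫ x, ∑ i : Fin 3, ∑ j : Fin 3, P d i j x * P d j i x)
      = ∫ x, ∑ i : Fin 3, ∑ j : Fin 3, P d i i x * P d j j x := by
    rw [integral_finset_sum _ (fun i _ => integrable_finset_sum _
      (fun j _ => PP_integrable hd hdc i j j i)),
      integral_finset_sum _ (fun i _ => integrable_finset_sum _
      (fun j _ => PP_integrable hd hdc i i j j))]
    refine Finset.sum_congr rfl (fun i _ => ?_)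
    rw [integral_finset_sum _ (fun j _ => PP_integrable hd hdc i j j i),
      integral_finset_sum _ (fun j _ => PP_integrable hd hdc i i j j)]
    exact Finset.sum_congr rfl (fun j _ => key_ibp hd hdc i j)
  -- rewrite LHS integrand
  have hF : (∫ x, frobSq (jac d x))
      = ∫ x, ∑ i : Fin 3, ∑ j : Fin 3, P d i j x * P d i j x := by
    congr 1; funext x
    simp only [frobSq, jac_eq_P hd x, pow_two]
  -- rewrite RHS integrand
  have hR : (∫ x, lamQ k₁ k₂ (jac d x) (jac d x))
      = k₁ * (∫ x, ∑ i : Fin 3, ∑ j : Fin 3, P d i i x * P d j j x)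
        + k₂ * ((∫ x, ∑ i : Fin 3, ∑ j : Fin 3, P d i j x * P d i j x)
          - ∫ x, ∑ i : Fin 3, ∑ j : Fin 3, P d i j x * P d j i x) := by
    have : (∫ x, lamQ k₁ k₂ (jac d x) (jac d x))
        = ∫ x, (k₁ * (∑ i : Fin 3, ∑ j : Fin 3, P d i i x * P d j j x)
          + k₂ * ((∑ i : Fin 3, ∑ j : Fin 3, P d i j x * P d i j x)
            - ∑ i : Fin 3, ∑ j : Fin 3, P d i j x * P d j i x)) := by
      congr 1; funext x
      rw [lamQ_eq]
      simp only [jac_eq_P hd x]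
    have hsub : Integrable (fun x => (∑ i : Fin 3, ∑ j : Fin 3, P d i j x * P d i j x)
        - ∑ i : Fin 3, ∑ j : Fin 3, P d i j x * P d j i x) := hIF.sub hIQ
    have h1 : Integrable (fun x => k₁ * ∑ i : Fin 3, ∑ j : Fin 3, P d i i x * P d j j x) :=
      hIT.const_mul _
    have h2 : Integrable (fun x => k₂ * ((∑ i : Fin 3, ∑ j : Fin 3, P d i j x * P d i j x)
        - ∑ i : Fin 3, ∑ j : Fin 3, P d i j x * P d j i x)) := hsub.const_mul _
    rw [this, integral_add h1 h2, integral_const_mul, integral_const_mul,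
      integral_sub hIF hIQ]
  -- nonnegativity facts
  have hTnn : 0 ≤ ∫ x, ∑ i : Fin 3, ∑ j : Fin 3, P d i i x * P d j j x := by
    apply integral_nonneg
    intro x
    simp only [Pi.zero_apply]
    have : (∑ i : Fin 3, ∑ j : Fin 3, P d i i x * P d j j x)
        = (∑ i : Fin 3, P d i i x) ^ 2 := by
      rw [pow_two, Finset.sum_mul_sum]
    rw [this]; positivity
  have hFQ : 0 ≤ (∫ x, ∑ i : Fin 3, ∑ j : Fin 3, P d i j x * P d i j x)
      - ∫ x, ∑ i : Fin 3, ∑ j : Fin 3, P d i j x * P d j i x := by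
    rw [← integral_sub hIF hIQ]
    apply integral_nonneg
    intro x
    simp only [Pi.zero_apply]
    have := trsq_le (Matrix.of fun i j => P d i j x)
    simp only [Matrix.of_apply] at this
    simpa using sub_nonneg.2 this
  rw [hF, hR]
  set a := ∫ x, ∑ i : Fin 3, ∑ j : Fin 3, P d i j x * P d i j x
  set b := ∫ x, ∑ i : Fin 3, ∑ j : Fin 3, P d i j x * P d j i x
  set t := ∫ x, ∑ i : Fin 3, ∑ j : Fin 3, P d i i x * P d j j x
  have hbt : b = t := hQT
  have hm1 : m ≤ k₁ := min_le_left _ _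
  have hm2 : m ≤ k₂ := min_le_right _ _
  rw [hbt] at hFQ ⊢
  nlinarith [mul_nonneg (sub_nonneg.2 hm1) hTnn, mul_nonneg (sub_nonneg.2 hm2) hFQ]
end
end

section
/- Leslie stress dissipation identity: let μ₁,…,μ₆ ∈ ℝ, set λ := μ₂ + μ₃ (Parodi's relation), let d ∈ ℝ³ with |d| = 1, V ∈ ℝ^{3×3} and q ∈ ℝ³. Define e := −(I − d⊗d)(λ V_sym d + q) and T^L := μ₁ (d · V_sym d) d⊗d + μ₄ V_sym + (μ₅+μ₆)(d ⊗ (V_sym d))_sym + (μ₂+μ₃)(d ⊗ e)_sym + λ (d ⊗ (V_sym d))_skw + (d ⊗ e)_skw. Then T^L : V − (d × (V_skw d)) · (d × q) + λ (d × (V_sym d)) · (d × q) = (μ₁ + λ²)(d · V_sym d)² + μ₄ |V_sym|² + (μ₅ + μ₆ − λ²) |V_sym d|². -/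
open Matrix MeasureTheory
open scoped BigOperators

noncomputable section

/-! For unit `d`, Lagrange's identity `(d × a) · (d × b) = a · b - (d · a)(d · b)` turns the two
cross-product terms into dot products. Since the symmetric (skew) parts of `T^L` only see `V_sym`
(`V_skw`), every term of `T^L : V` is a dot product of `d`, `q`, `V_sym d` and `V_skw d` as well.
The `q`-part of `e` then cancels the cross-product terms, its `λ V_sym d`-part yields the `λ²`
corrections, and what is left vanishes because `d · V_skw d = 0`. -/

section TransposeSymmetry

variable {n R : Type*} [Fintype n] [CommRing R] {S W : Matrix n n R} (a b : n → R)

theorem Matrix.IsSymm.dotProduct_mulVec (hS : S.IsSymm) : a ⬝ᵥ S *ᵥ b = S *ᵥ a ⬝ᵥ b := by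
  rw [Matrix.dotProduct_mulVec, ← mulVec_transpose, hS.eq]

theorem dotProduct_mulVec_of_transpose_eq_neg (hW : Wᵀ = -W) :
    a ⬝ᵥ W *ᵥ b = -(W *ᵥ a ⬝ᵥ b) := by
  rw [dotProduct_mulVec, ← mulVec_transpose, hW, neg_mulVec, neg_dotProduct]

theorem dotProduct_mulVec_self_of_transpose_eq_neg [NoZeroDivisors R] [CharZero R]
    (hW : Wᵀ = -W) : a ⬝ᵥ W *ᵥ a = 0 :=
  self_eq_neg.mp <| (dotProduct_mulVec_of_transpose_eq_neg a a hW).trans <| by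
    rw [dotProduct_comm]

end TransposeSymmetry

theorem cross_dot_cross_of_dotProduct_self_eq_one {R : Type*} [CommRing R]
    {u : Fin 3 → R} (hu : u ⬝ᵥ u = 1) (v x : Fin 3 → R) :
    u ⨯₃ v ⬝ᵥ u ⨯₃ x = v ⬝ᵥ x - u ⬝ᵥ v * u ⬝ᵥ x := by
  rw [cross_dot_cross, hu, one_mul, dotProduct_comm v u, mul_comm]

section Fin3

variable (a b x : Fin 3 → ℝ) (A M : Matrix (Fin 3) (Fin 3) ℝ)

theorem dot3_eq_dotProduct : dot3 a b = a ⬝ᵥ b := rfl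

theorem normSq_eq_dotProduct : normSq a = a ⬝ᵥ a := by
  simp only [normSq, dotProduct, sq]

theorem cross3_eq_crossProduct : cross3 a b = a ⨯₃ b := rfl

theorem outer_eq_vecMulVec : outer a b = vecMulVec a b := rfl

theorem one_sub_outer_self_mulVec : (1 - outer a a) *ᵥ x = x - (a ⬝ᵥ x) • a := by
  rw [sub_mulVec, one_mulVec, outer_eq_vecMulVec, vecMulVec_mulVec, op_smul_eq_smul]

theorem symPart_isSymm : (symPart A).IsSymm := by
  simp only [IsSymm, symPart, transpose_smul, transpose_add, transpose_transpose, add_comm]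

theorem skwPart_transpose : (skwPart A)ᵀ = -skwPart A := by
  simp only [skwPart, transpose_smul, transpose_sub, transpose_transpose, ← smul_neg, neg_sub]

theorem symPart_add_skwPart : symPart A + skwPart A = A := by
  rw [symPart, skwPart, ← smul_add, add_add_sub_cancel, ← two_smul ℝ A, smul_smul]
  norm_num

theorem dotProduct_symPart_mulVec_self : a ⬝ᵥ symPart A *ᵥ a = a ⬝ᵥ A *ᵥ a := by
  conv_rhs => rw [← symPart_add_skwPart A, add_mulVec, dotProduct_add,
    dotProduct_mulVec_self_of_transpose_eq_neg a (skwPart_transpose A), add_zero]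

theorem frob_add_left (B : Matrix (Fin 3) (Fin 3) ℝ) : frob (A + B) M = frob A M + frob B M := by
  simp only [frob, Matrix.add_apply, add_mul, Finset.sum_add_distrib]

theorem frob_smul_left (c : ℝ) : frob (c • A) M = c * frob A M := by
  simp only [frob, Matrix.smul_apply, smul_eq_mul, Finset.mul_sum, mul_assoc]

theorem frob_outer : frob (outer a b) M = a ⬝ᵥ M *ᵥ b := by
  simp only [frob, outer, of_apply, dotProduct, mulVec, Fin.sum_univ_three]
  ring

theorem frob_symPart_left : frob (symPart A) M = frob A (symPart M) := by
  simp only [frob, symPart, Matrix.smul_apply, Matrix.add_apply, transpose_apply, smul_eq_mul,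
    Fin.sum_univ_three]
  ring

theorem frob_skwPart_left : frob (skwPart A) M = frob A (skwPart M) := by
  simp only [frob, skwPart, Matrix.smul_apply, Matrix.sub_apply, transpose_apply, smul_eq_mul,
    Fin.sum_univ_three]
  ring

theorem frob_symPart_self : frob (symPart A) A = frobSq (symPart A) := by
  simp only [frob, frobSq, symPart, Matrix.smul_apply, Matrix.add_apply, transpose_apply,
    smul_eq_mul, Fin.sum_univ_three]
  ring

end Fin3

/-- Leslie stress dissipation identity:
`T^L : V − (d × (V_skw d)) ⬝ (d × q) + λ (d × (V_sym d)) ⬝ (d × q)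
  = (μ₁ + λ²)(d ⬝ V_sym d)² + μ₄ |V_sym|² + (μ₅ + μ₆ − λ²)|V_sym d|²`
under Parodi's relation `λ = μ₂ + μ₃`. -/
theorem leslie_stress_dissipation (μ₁ μ₂ μ₃ μ₄ μ₅ μ₆ lam : ℝ) (hlam : lam = μ₂ + μ₃)
    (d : Fin 3 → ℝ) (hd : normSq d = 1) (V : Matrix (Fin 3) (Fin 3) ℝ) (q : Fin 3 → ℝ)
    (e : Fin 3 → ℝ)
    (he : e = -(Matrix.mulVec ((1 : Matrix (Fin 3) (Fin 3) ℝ) - outer d d)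
        (lam • Matrix.mulVec (symPart V) d + q)))
    (TL : Matrix (Fin 3) (Fin 3) ℝ)
    (hTL : TL = (μ₁ * dot3 d (Matrix.mulVec (symPart V) d)) • outer d d
        + μ₄ • symPart V
        + (μ₅ + μ₆) • symPart (outer d (Matrix.mulVec (symPart V) d))
        + (μ₂ + μ₃) • symPart (outer d e)
        + lam • skwPart (outer d (Matrix.mulVec (symPart V) d))
        + skwPart (outer d e)) :
    frob TL V - dot3 (cross3 d (Matrix.mulVec (skwPart V) d)) (cross3 d q)
        + lam * dot3 (cross3 d (Matrix.mulVec (symPart V) d)) (cross3 d q)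
      = (μ₁ + lam ^ 2) * dot3 d (Matrix.mulVec (symPart V) d) ^ 2
        + μ₄ * frobSq (symPart V)
        + (μ₅ + μ₆ - lam ^ 2) * normSq (Matrix.mulVec (symPart V) d) := by
  subst he hTL
  rw [← hlam]
  have hdd : d ⬝ᵥ d = 1 := by rwa [← normSq_eq_dotProduct]
  have hdVd : d ⬝ᵥ V *ᵥ d = d ⬝ᵥ symPart V *ᵥ d := (dotProduct_symPart_mulVec_self d V).symm
  have hwd : skwPart V *ᵥ d ⬝ᵥ d = 0 := by
    rw [dotProduct_comm, dotProduct_mulVec_self_of_transpose_eq_neg d (skwPart_transpose V)]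
  simp only [frob_add_left, frob_smul_left, frob_symPart_self, frob_symPart_left,
    frob_skwPart_left, frob_outer, hdVd, one_sub_outer_self_mulVec, dot3_eq_dotProduct,
    cross3_eq_crossProduct, normSq_eq_dotProduct, cross_dot_cross_of_dotProduct_self_eq_one hdd]
  simp only [(symPart_isSymm V).dotProduct_mulVec d,
    dotProduct_mulVec_of_transpose_eq_neg d _ (skwPart_transpose V), hwd,
    dotProduct_neg, dotProduct_sub, dotProduct_add, dotProduct_smul, smul_eq_mul]
  ring
end
end
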